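/- Let p be a prime and let 0 < m ≤ n with p^k ≤ n < p^{k+1}; write n = b·p^k + d (0 < b < p, 0 ≤ d < p^k). Suppose m + n ≤ p^{k+1}, 1 ≤ m + d ≤ p^k, m < p^k, and d > 0 (Case 4 of the recursive definition of s_p). Then λ(m,n,p) is standard if and only if λ(m, b·p^k − d, p) is standard. -/

import Mathlib

/-- The negative reverse of a sequence `(a₁, …, a_u)`, namely `(−a_u, …, −a₁)`. -/
def negRev (s : List ℤ) : List ℤ := s.reverse.map (fun x => -x)

/-- Fuel-based implementation of Barry's recursively defined sequence `s_p(m,n)`.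
In every recursive call the quantity `2*m + n` strictly decreases, so fuel
`2*m + n + 1` always suffices; see `sp` below. -/
def spAux (p : ℕ) : ℕ → ℕ → ℕ → List ℤ
  | 0, _, _ => []
  | (fuel+1), m, n =>
    if m = 0 then List.replicate n (0 : ℤ)
    else
      let k := Nat.log p n
      let q := p ^ k
      let b := n / q
      let d := n % q
      let a := m / q
      let c := m % q
      let s12 : List ℤ × List ℤ :=
        if p ^ (k+1) < m + n then
          -- Case 1
          (List.replicate (m + n - p ^ (k+1)) ((p ^ (k+1) : ℕ) : ℤ),
           spAux p fuel (p ^ (k+1) - n) (p ^ (k+1) - m))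
        else if q < c + d then
          -- Case 2
          (List.replicate (c + d - q) (((a + b + 1) * q : ℕ) : ℤ),
           spAux p fuel ((a + b + 1) * q - n) ((a + b + 1) * q - m))
        else if 1 ≤ c + d ∧ 0 < a then
          -- Case 3
          ((spAux p fuel (min c d) (max c d)).map (fun x => x + (((a + b) * q : ℕ) : ℤ)),
           spAux p fuel ((a + b) * q - n) ((a + b) * q - m))
        else if a = 0 ∧ 0 < d then
          -- Case 4
          (((spAux p fuel m (b * q - d)).filter (fun x => decide (x < 0))).map
              (fun x => x + ((2 * b * q : ℕ) : ℤ)),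
           List.replicate (n - m) (0 : ℤ))
        else if a = 0 ∧ d = 0 then
          -- Case 5
          (List.replicate m ((b * q : ℕ) : ℤ),
           List.replicate (b * q - m) (0 : ℤ))
        else
          -- Case 6
          (List.replicate q (((a + b - 1) * q : ℕ) : ℤ),
           spAux p fuel ((a - 1) * q) ((b - 1) * q))
      s12.1 ++ s12.2 ++ negRev s12.1

/-- Barry's sequence `s_p(m,n)`, a nonincreasing sequence of `m + n` integers. -/
def sp (p m n : ℕ) : List ℤ := spAux p (2 * m + n + 1) m n

/-- The Jordan partition `λ(m,n,p)`: the first `m` terms of `s_p(m,n)`. -/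
def jordanPartition (p m n : ℕ) : List ℤ := (sp p m n).take m

/-- `λ(m,n,p)` is standard iff `λ_i = m + n − 2i + 1` for all `1 ≤ i ≤ m`. -/
def IsStandard (p m n : ℕ) : Prop :=
  jordanPartition p m n =
    (List.range m).map (fun i => (m : ℤ) + (n : ℤ) - 2 * ((i : ℤ) + 1) + 1)

-- helpers
lemma negRev_append (s t : List ℤ) : negRev (s ++ t) = negRev t ++ negRev s := by
  simp [negRev]
lemma length_negRev (s : List ℤ) : (negRev s).length = s.length := by simp [negRev]
lemma mem_negRev {x : ℤ} {s : List ℤ} : x ∈ negRev s ↔ -x ∈ s := by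
  simp only [negRev, List.mem_map, List.mem_reverse]
  constructor
  · rintro ⟨a, ha, rfl⟩; simpa using ha
  · intro h; exact ⟨-x, h, by ring⟩

lemma spAux_zero (p n f : ℕ) : spAux p (f+1) 0 n = List.replicate n (0:ℤ) := by
  rw [spAux]; simp

lemma spAux_case1 (p f m n k : ℕ) (hk : Nat.log p n = k) (hm : ¬ m = 0)
    (h1 : p ^ (k+1) < m + n) :
    spAux p (f+1) m n =
      List.replicate (m + n - p ^ (k+1)) ((p ^ (k+1) : ℕ) : ℤ)
        ++ spAux p f (p ^ (k+1) - n) (p ^ (k+1) - m)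
        ++ negRev (List.replicate (m + n - p ^ (k+1)) ((p ^ (k+1) : ℕ) : ℤ)) := by
  subst hk; rw [spAux]; simp only [if_neg hm, if_pos h1]

lemma spAux_case2 (p f m n k q b d a c : ℕ) (hk : Nat.log p n = k) (hq : p ^ k = q)
    (hb : n / q = b) (hd : n % q = d) (ha : m / q = a) (hc : m % q = c) (hm : ¬ m = 0)
    (h1 : ¬ p ^ (k+1) < m + n) (h2 : q < c + d) :
    spAux p (f+1) m n =
      List.replicate (c + d - q) (((a + b + 1) * q : ℕ) : ℤ)
        ++ spAux p f ((a + b + 1) * q - n) ((a + b + 1) * q - m)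
        ++ negRev (List.replicate (c + d - q) (((a + b + 1) * q : ℕ) : ℤ)) := by
  subst hk hq hb hd ha hc; rw [spAux]; simp only [if_neg hm, if_neg h1, if_pos h2]

lemma spAux_case3 (p f m n k q b d a c : ℕ) (hk : Nat.log p n = k) (hq : p ^ k = q)
    (hb : n / q = b) (hd : n % q = d) (ha : m / q = a) (hc : m % q = c) (hm : ¬ m = 0)
    (h1 : ¬ p ^ (k+1) < m + n) (h2 : ¬ q < c + d) (h3 : 1 ≤ c + d ∧ 0 < a) :
    spAux p (f+1) m n =
      (spAux p f (min c d) (max c d)).map (fun x => x + (((a + b) * q : ℕ) : ℤ))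
        ++ spAux p f ((a + b) * q - n) ((a + b) * q - m)
        ++ negRev ((spAux p f (min c d) (max c d)).map (fun x => x + (((a + b) * q : ℕ) : ℤ))) := by
  subst hk hq hb hd ha hc; rw [spAux]; simp only [if_neg hm, if_neg h1, if_neg h2, if_pos h3]

lemma spAux_case4 (p f m n k q b d a c : ℕ) (hk : Nat.log p n = k) (hq : p ^ k = q)
    (hb : n / q = b) (hd : n % q = d) (ha : m / q = a) (hc : m % q = c) (hm : ¬ m = 0)
    (h1 : ¬ p ^ (k+1) < m + n) (h2 : ¬ q < c + d) (h3 : ¬ (1 ≤ c + d ∧ 0 < a))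
    (h4 : a = 0 ∧ 0 < d) :
    spAux p (f+1) m n =
      ((spAux p f m (b * q - d)).filter (fun x => decide (x < 0))).map
          (fun x => x + ((2 * b * q : ℕ) : ℤ))
        ++ List.replicate (n - m) (0 : ℤ)
        ++ negRev (((spAux p f m (b * q - d)).filter (fun x => decide (x < 0))).map
          (fun x => x + ((2 * b * q : ℕ) : ℤ))) := by
  subst hk hq hb hd ha hc; rw [spAux]
  simp only [if_neg hm, if_neg h1, if_neg h2, if_neg h3, if_pos h4]

lemma spAux_case5 (p f m n k q b d a c : ℕ) (hk : Nat.log p n = k) (hq : p ^ k = q)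
    (hb : n / q = b) (hd : n % q = d) (ha : m / q = a) (hc : m % q = c) (hm : ¬ m = 0)
    (h1 : ¬ p ^ (k+1) < m + n) (h2 : ¬ q < c + d) (h3 : ¬ (1 ≤ c + d ∧ 0 < a))
    (h4 : ¬ (a = 0 ∧ 0 < d)) (h5 : a = 0 ∧ d = 0) :
    spAux p (f+1) m n =
      List.replicate m ((b * q : ℕ) : ℤ) ++ List.replicate (b * q - m) (0 : ℤ)
        ++ negRev (List.replicate m ((b * q : ℕ) : ℤ)) := by
  subst hk hq hb hd ha hc; rw [spAux]
  simp only [if_neg hm, if_neg h1, if_neg h2, if_neg h3, if_neg h4, if_pos h5]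

lemma spAux_case6 (p f m n k q b d a c : ℕ) (hk : Nat.log p n = k) (hq : p ^ k = q)
    (hb : n / q = b) (hd : n % q = d) (ha : m / q = a) (hc : m % q = c) (hm : ¬ m = 0)
    (h1 : ¬ p ^ (k+1) < m + n) (h2 : ¬ q < c + d) (h3 : ¬ (1 ≤ c + d ∧ 0 < a))
    (h4 : ¬ (a = 0 ∧ 0 < d)) (h5 : ¬ (a = 0 ∧ d = 0)) :
    spAux p (f+1) m n =
      List.replicate q (((a + b - 1) * q : ℕ) : ℤ)
        ++ spAux p f ((a - 1) * q) ((b - 1) * q)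
        ++ negRev (List.replicate q (((a + b - 1) * q : ℕ) : ℤ)) := by
  subst hk hq hb hd ha hc; rw [spAux]
  simp only [if_neg hm, if_neg h1, if_neg h2, if_neg h3, if_neg h4, if_neg h5]

def SPbundle (m n : ℕ) (s : List ℤ) : Prop :=
  ∃ P : List ℤ, s = P ++ List.replicate (n - m) (0:ℤ) ++ negRev P ∧
    P.length = m ∧ ∀ x ∈ P, (n : ℤ) - m + 1 ≤ x ∧ x ≤ (m : ℤ) + n - 1

lemma SPbundle.abs_lt {m n : ℕ} {s : List ℤ} (h : SPbundle m n s) :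
    ∀ y ∈ s, -((m:ℤ)+n) < y ∧ y < (m:ℤ)+n := by
  obtain ⟨P, rfl, hlen, hbd⟩ := h
  intro y hy
  simp only [List.mem_append] at hy
  rcases hy with (hy | hy) | hy
  · have := hbd y hy; omega
  · obtain ⟨hne, rfl⟩ := List.mem_replicate.mp hy
    have : n - m ≠ 0 := by
      intro h0; rw [h0] at hne; exact hne rfl
    omega
  · rw [mem_negRev] at hy
    have := hbd _ hy; omega

lemma filter_neg_bundle (P : List ℤ) (z : ℕ) (hP : ∀ x ∈ P, 0 < x) :
    (P ++ List.replicate z (0:ℤ) ++ negRev P).filter (fun x => decide (x < 0)) = negRev P := by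
  rw [List.filter_append, List.filter_append]
  have h1 : P.filter (fun x => decide (x < 0)) = [] := by
    rw [List.filter_eq_nil_iff]
    intro a ha
    have := hP a ha
    simp; omega
  have h2 : (List.replicate z (0:ℤ)).filter (fun x => decide (x < 0)) = [] := by
    rw [List.filter_eq_nil_iff]
    intro a ha
    obtain ⟨-, rfl⟩ := List.mem_replicate.mp ha
    simp
  have h3 : (negRev P).filter (fun x => decide (x < 0)) = negRev P := by
    rw [List.filter_eq_self]
    intro a ha
    have := hP _ (mem_negRev.mp ha)
    simp; omega
  rw [h1, h2, h3]; simp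

lemma spAux_spec (p : ℕ) (hp : 2 ≤ p) :
    ∀ N, ∀ m n fuel, 2*m+n ≤ N → m ≤ n → 2*m+n+1 ≤ fuel →
      spAux p fuel m n = sp p m n ∧ SPbundle m n (sp p m n) := by
  intro N
  induction N using Nat.strong_induction_on with
  | _ N IH =>
  intro m n fuel hN hmn hfuel
  obtain ⟨f, rfl⟩ : ∃ f, fuel = f + 1 := ⟨fuel - 1, by omega⟩
  by_cases hm : m = 0
  · subst hm
    have hz : ∀ g, spAux p (g+1) 0 n = List.replicate n (0:ℤ) := fun g => spAux_zero p n g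
    have hsp : sp p 0 n = List.replicate n (0:ℤ) := by
      rw [sp]; exact hz _
    refine ⟨by rw [hz, hsp], ⟨[], ?_, rfl, by simp⟩⟩
    rw [hsp]; simp [negRev]
  -- now m ≥ 1
  have hn0 : n ≠ 0 := by omega
  obtain ⟨k, hk⟩ : ∃ k, Nat.log p n = k := ⟨_, rfl⟩
  obtain ⟨q, hqd⟩ : ∃ q, p ^ k = q := ⟨_, rfl⟩
  obtain ⟨b, hbd2⟩ : ∃ b, n / q = b := ⟨_, rfl⟩
  obtain ⟨d, hdd⟩ : ∃ d, n % q = d := ⟨_, rfl⟩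
  obtain ⟨a, had⟩ : ∃ a, m / q = a := ⟨_, rfl⟩
  obtain ⟨c, hcd⟩ : ∃ c, m % q = c := ⟨_, rfl⟩
  have hq0 : 0 < q := hqd ▸ pow_pos (by omega) k
  have hqn : q ≤ n := by rw [← hqd, ← hk]; exact Nat.pow_log_le_self p hn0
  have hnp : n < p ^ (k+1) := by rw [← hk]; exact Nat.lt_pow_succ_log_self (by omega) n
  have hpk1 : p ^ (k+1) = p * q := by rw [pow_succ, hqd, mul_comm]
  have hnbd : q * b + d = n := by rw [← hbd2, ← hdd]; exact Nat.div_add_mod n q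
  have hmac : q * a + c = m := by rw [← had, ← hcd]; exact Nat.div_add_mod m q
  have hdq : d < q := by rw [← hdd]; exact Nat.mod_lt _ hq0
  have hcq : c < q := by rw [← hcd]; exact Nat.mod_lt _ hq0
  have hb1 : 1 ≤ b := by rw [← hbd2]; exact (Nat.one_le_div_iff hq0).mpr hqn
  have hnpq : n < q * p := by rw [mul_comm, ← hpk1]; exact hnp
  have hbp : b < p := by rw [← hbd2]; exact Nat.div_lt_of_lt_mul hnpq
  have hab : a ≤ b := by rw [← had, ← hbd2]; exact Nat.div_le_div_right hmn
  have hBq : q * b ≤ q * (p-1) := Nat.mul_le_mul_left q (by omega)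
  have hq1 : q * (p-1) = p * q - q := by rw [mul_comm, Nat.sub_one_mul]
  have hq2 : q ≤ p * q := Nat.le_mul_of_pos_left q (by omega)
  have hqp : q * (p-1) + q = p ^ (k+1) := by omega
  have hB1 : q * 1 ≤ q * b := Nat.mul_le_mul_left q hb1
  by_cases h1 : p ^ (k+1) < m + n
  · -- Case 1
    have hmn1 : p^(k+1) - n ≤ p^(k+1) - m := by omega
    have IH1 : ∀ g, 2*m+n ≤ g →
        spAux p g (p^(k+1)-n) (p^(k+1)-m) = sp p (p^(k+1)-n) (p^(k+1)-m) ∧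
          SPbundle (p^(k+1)-n) (p^(k+1)-m) (sp p (p^(k+1)-n) (p^(k+1)-m)) := by
      intro g hg
      exact IH (2*(p^(k+1)-n)+(p^(k+1)-m)) (by omega) _ _ g le_rfl hmn1 (by omega)
    have E : ∀ g, 2*m+n ≤ g → spAux p (g+1) m n =
        List.replicate (m + n - p^(k+1)) ((p^(k+1) : ℕ) : ℤ)
          ++ sp p (p^(k+1)-n) (p^(k+1)-m)
          ++ negRev (List.replicate (m + n - p^(k+1)) ((p^(k+1) : ℕ) : ℤ)) := by
      intro g hg
      rw [spAux_case1 p g m n k hk hm h1, (IH1 g hg).1]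
    constructor
    · rw [sp, E f (by omega), E (2*m+n) le_rfl]
    · rw [sp, E (2*m+n) le_rfl]
      obtain ⟨P₂, hsplit, hlen, hbdP⟩ := (IH1 (2*m+n) le_rfl).2
      refine ⟨List.replicate (m + n - p^(k+1)) ((p^(k+1) : ℕ) : ℤ) ++ P₂, ?_, ?_, ?_⟩
      · rw [hsplit, negRev_append]
        have hz : (p^(k+1) - m) - (p^(k+1) - n) = n - m := by omega
        rw [hz]; simp [List.append_assoc]
      · rw [List.length_append, List.length_replicate, hlen]; omega
      · intro x hx
        rcases List.mem_append.mp hx with hx | hx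
        · obtain ⟨-, rfl⟩ := List.mem_replicate.mp hx
          constructor <;> omega
        · have := hbdP x hx; omega
  by_cases h2 : q < c + d
  · -- Case 2
    have hR : (a+b+1)*q = q*a + q*b + q := by ring
    have hmn1 : (a+b+1)*q - n ≤ (a+b+1)*q - m := by omega
    have IH1 : ∀ g, 2*m+n ≤ g →
        spAux p g ((a+b+1)*q-n) ((a+b+1)*q-m) = sp p ((a+b+1)*q-n) ((a+b+1)*q-m) ∧
          SPbundle ((a+b+1)*q-n) ((a+b+1)*q-m) (sp p ((a+b+1)*q-n) ((a+b+1)*q-m)) := by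
      intro g hg
      exact IH (2*((a+b+1)*q-n)+((a+b+1)*q-m)) (by omega) _ _ g le_rfl hmn1 (by omega)
    have E : ∀ g, 2*m+n ≤ g → spAux p (g+1) m n =
        List.replicate (c + d - q) (((a+b+1)*q : ℕ) : ℤ)
          ++ sp p ((a+b+1)*q-n) ((a+b+1)*q-m)
          ++ negRev (List.replicate (c + d - q) (((a+b+1)*q : ℕ) : ℤ)) := by
      intro g hg
      rw [spAux_case2 p g m n k q b d a c hk hqd hbd2 hdd had
        hcd hm h1 h2, (IH1 g hg).1]
    constructor
    · rw [sp, E f (by omega), E (2*m+n) le_rfl]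
    · rw [sp, E (2*m+n) le_rfl]
      obtain ⟨P₂, hsplit, hlen, hbdP⟩ := (IH1 (2*m+n) le_rfl).2
      refine ⟨List.replicate (c + d - q) (((a+b+1)*q : ℕ) : ℤ) ++ P₂, ?_, ?_, ?_⟩
      · rw [hsplit, negRev_append]
        have hz : ((a+b+1)*q - m) - ((a+b+1)*q - n) = n - m := by omega
        rw [hz]; simp [List.append_assoc]
      · rw [List.length_append, List.length_replicate, hlen]; omega
      · intro x hx
        rcases List.mem_append.mp hx with hx | hx
        · obtain ⟨-, rfl⟩ := List.mem_replicate.mp hx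
          constructor <;> omega
        · have := hbdP x hx; omega
  by_cases h3 : 1 ≤ c + d ∧ 0 < a
  · -- Case 3
    have hA : q * 1 ≤ q * a := Nat.mul_le_mul_left q h3.2
    have hR : (a+b)*q = q*a + q*b := by ring
    have hmima : min c d ≤ max c d := by omega
    have hmn1 : (a+b)*q - n ≤ (a+b)*q - m := by omega
    have IH3 : ∀ g, 2*m+n ≤ g →
        spAux p g (min c d) (max c d) = sp p (min c d) (max c d) ∧
          SPbundle (min c d) (max c d) (sp p (min c d) (max c d)) := by
      intro g hg
      exact IH (2*(min c d)+(max c d)) (by omega) _ _ g le_rfl hmima (by omega)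
    have IH1 : ∀ g, 2*m+n ≤ g →
        spAux p g ((a+b)*q-n) ((a+b)*q-m) = sp p ((a+b)*q-n) ((a+b)*q-m) ∧
          SPbundle ((a+b)*q-n) ((a+b)*q-m) (sp p ((a+b)*q-n) ((a+b)*q-m)) := by
      intro g hg
      exact IH (2*((a+b)*q-n)+((a+b)*q-m)) (by omega) _ _ g le_rfl hmn1 (by omega)
    have E : ∀ g, 2*m+n ≤ g → spAux p (g+1) m n =
        (sp p (min c d) (max c d)).map (fun x => x + (((a+b)*q : ℕ) : ℤ))
          ++ sp p ((a+b)*q-n) ((a+b)*q-m)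
          ++ negRev ((sp p (min c d) (max c d)).map (fun x => x + (((a+b)*q : ℕ) : ℤ))) := by
      intro g hg
      rw [spAux_case3 p g m n k q b d a c hk hqd hbd2 hdd had
        hcd hm h1 h2 h3, (IH3 g hg).1, (IH1 g hg).1]
    constructor
    · rw [sp, E f (by omega), E (2*m+n) le_rfl]
    · rw [sp, E (2*m+n) le_rfl]
      obtain ⟨P₂, hsplit, hlen, hbdP⟩ := (IH1 (2*m+n) le_rfl).2
      have hbun3 := (IH3 (2*m+n) le_rfl).2
      have habs3 := hbun3.abs_lt
      have hlen3 : (sp p (min c d) (max c d)).length = min c d + max c d := by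
        obtain ⟨P₃, hsplit3, hlen3, -⟩ := hbun3
        rw [hsplit3]; simp [length_negRev, hlen3]; try omega
      refine ⟨(sp p (min c d) (max c d)).map (fun x => x + (((a+b)*q : ℕ) : ℤ)) ++ P₂,
        ?_, ?_, ?_⟩
      · rw [hsplit, negRev_append]
        have hz : ((a+b)*q - m) - ((a+b)*q - n) = n - m := by omega
        rw [hz]; simp [List.append_assoc]
      · rw [List.length_append, List.length_map, hlen3, hlen]; omega
      · intro x hx
        rcases List.mem_append.mp hx with hx | hx
        · obtain ⟨y, hy, rfl⟩ := List.mem_map.mp hx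
          have := habs3 y hy; constructor <;> omega
        · have := hbdP x hx; omega
  by_cases h4 : a = 0 ∧ 0 < d
  · -- Case 4
    have hqa0 : q * a = 0 := by rw [h4.1, mul_zero]
    have hRb : b*q = q*b := mul_comm b q
    have hmn1 : m ≤ b*q - d := by omega
    have IH1 : ∀ g, 2*m+n ≤ g →
        spAux p g m (b*q-d) = sp p m (b*q-d) ∧ SPbundle m (b*q-d) (sp p m (b*q-d)) := by
      intro g hg
      exact IH (2*m+(b*q-d)) (by omega) _ _ g le_rfl hmn1 (by omega)
    obtain ⟨P', hsplit', hlen', hbd'⟩ := (IH1 (2*m+n) le_rfl).2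
    have hpos : ∀ x ∈ P', 0 < x := by
      intro x hx; have := hbd' x hx; omega
    have hfil : (sp p m (b*q-d)).filter (fun x => decide (x < 0)) = negRev P' := by
      rw [hsplit']; exact filter_neg_bundle P' _ hpos
    have E : ∀ g, 2*m+n ≤ g → spAux p (g+1) m n =
        (negRev P').map (fun x => x + ((2*b*q : ℕ) : ℤ))
          ++ List.replicate (n - m) (0 : ℤ)
          ++ negRev ((negRev P').map (fun x => x + ((2*b*q : ℕ) : ℤ))) := by
      intro g hg
      rw [spAux_case4 p g m n k q b d a c hk hqd hbd2 hdd had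
        hcd hm h1 h2 h3 h4, (IH1 g hg).1, hfil]
    constructor
    · rw [sp, E f (by omega), E (2*m+n) le_rfl]
    · rw [sp, E (2*m+n) le_rfl]
      have h2bq : 2*b*q = q*b + q*b := by ring
      refine ⟨(negRev P').map (fun x => x + ((2*b*q : ℕ) : ℤ)), rfl, ?_, ?_⟩
      · rw [List.length_map, length_negRev, hlen']
      · intro x hx
        obtain ⟨y, hy, rfl⟩ := List.mem_map.mp hx
        have := hbd' (-y) (mem_negRev.mp hy)
        constructor <;> omega
  by_cases h5 : a = 0 ∧ d = 0
  · -- Case 5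
    have hqa0 : q * a = 0 := by rw [h5.1, mul_zero]
    have hRb : b*q = q*b := mul_comm b q
    have E : ∀ g : ℕ, spAux p (g+1) m n =
        List.replicate m ((b*q : ℕ) : ℤ) ++ List.replicate (b*q - m) (0 : ℤ)
          ++ negRev (List.replicate m ((b*q : ℕ) : ℤ)) := by
      intro g
      rw [spAux_case5 p g m n k q b d a c hk hqd hbd2 hdd had
        hcd hm h1 h2 h3 h4 h5]
    constructor
    · rw [sp, E f, E (2*m+n)]
    · rw [sp, E (2*m+n)]
      have hz : b*q - m = n - m := by omega
      rw [hz]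
      refine ⟨List.replicate m ((b*q : ℕ) : ℤ), rfl, List.length_replicate, ?_⟩
      intro x hx
      obtain ⟨-, rfl⟩ := List.mem_replicate.mp hx
      constructor <;> omega
  · -- Case 6
    have ha0 : 0 < a := by omega
    have hA : q * 1 ≤ q * a := Nat.mul_le_mul_left q ha0
    have hcd0 : c = 0 ∧ d = 0 := by
      constructor <;> omega
    have hcomm : a*q = q*a := mul_comm a q
    have hcommb : b*q = q*b := mul_comm b q
    have h6a : (a-1)*q + q = q*a := by rw [Nat.sub_one_mul]; omega
    have h6b : (b-1)*q + q = q*b := by rw [Nat.sub_one_mul]; omega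
    have h6ab : (a+b-1)*q + q = q*a + q*b := by
      rw [Nat.sub_one_mul]
      have : (a+b)*q = q*a + q*b := by ring
      omega
    have hmn1 : (a-1)*q ≤ (b-1)*q := by
      have := Nat.mul_le_mul_left q hab; omega
    have IH1 : ∀ g, 2*m+n ≤ g →
        spAux p g ((a-1)*q) ((b-1)*q) = sp p ((a-1)*q) ((b-1)*q) ∧
          SPbundle ((a-1)*q) ((b-1)*q) (sp p ((a-1)*q) ((b-1)*q)) := by
      intro g hg
      have := Nat.mul_le_mul_left q hab
      exact IH (2*((a-1)*q)+((b-1)*q)) (by omega) _ _ g le_rfl hmn1 (by omega)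
    have E : ∀ g, 2*m+n ≤ g → spAux p (g+1) m n =
        List.replicate q (((a+b-1)*q : ℕ) : ℤ)
          ++ sp p ((a-1)*q) ((b-1)*q)
          ++ negRev (List.replicate q (((a+b-1)*q : ℕ) : ℤ)) := by
      intro g hg
      rw [spAux_case6 p g m n k q b d a c hk hqd hbd2 hdd had
        hcd hm h1 h2 h3 h4 h5, (IH1 g hg).1]
    constructor
    · rw [sp, E f (by omega), E (2*m+n) le_rfl]
    · rw [sp, E (2*m+n) le_rfl]
      obtain ⟨P₂, hsplit, hlen, hbdP⟩ := (IH1 (2*m+n) le_rfl).2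
      have := Nat.mul_le_mul_left q hab
      refine ⟨List.replicate q (((a+b-1)*q : ℕ) : ℤ) ++ P₂, ?_, ?_, ?_⟩
      · rw [hsplit, negRev_append]
        have hz : ((b-1)*q) - ((a-1)*q) = n - m := by omega
        rw [hz]; simp [List.append_assoc]
      · rw [List.length_append, List.length_replicate, hlen]; omega
      · intro x hx
        rcases List.mem_append.mp hx with hx | hx
        · obtain ⟨-, rfl⟩ := List.mem_replicate.mp hx
          constructor <;> omega
        · have := hbdP x hx; omega

lemma negRev_injective : Function.Injective negRev := fun s t h => by
  have h1 := List.map_injective_iff.mpr (fun a b hab => neg_injective hab : Function.Injective (fun x : ℤ => -x)) h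
  exact List.reverse_injective h1

lemma stdNorm (m n : ℕ) :
    (List.range m).map (fun i => (m : ℤ) + (n : ℤ) - 2 * ((i : ℤ) + 1) + 1)
      = List.map (fun i : ℕ => (m : ℤ) + (n : ℤ) - 2 * ((i : ℤ) + 1) + 1) (List.range m) := by
  rw [bind_pure_comp]; simp

/-- **Proposition 1, Case 4 (Barry).** Let `p` be prime, `0 < m ≤ n` with
`pᵏ ≤ n < p^(k+1)`, `n = b·pᵏ + d` (`0 < b < p`, `0 ≤ d < pᵏ`), `m + n ≤ p^(k+1)`,
`1 ≤ m + d ≤ pᵏ`, `m < pᵏ`, and `d > 0`. Then `λ(m,n,p)` is standard iff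
`λ(m, b·pᵏ − d, p)` is standard. -/
theorem jordanPartition_standard_iff_case4 (p : ℕ) (hp : Nat.Prime p)
    (m n k b d : ℕ) (hm : 0 < m) (hmn : m ≤ n)
    (hk1 : p ^ k ≤ n) (hk2 : n < p ^ (k + 1))
    (hn : n = b * p ^ k + d) (hb0 : 0 < b) (hbp : b < p) (hd : d < p ^ k)
    (hcase1 : m + n ≤ p ^ (k + 1)) (hcase2 : 1 ≤ m + d) (hcase3 : m + d ≤ p ^ k)
    (hcase4 : m < p ^ k) (hcase5 : 0 < d) :
    IsStandard p m n ↔ IsStandard p m (b * p ^ k - d) := by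
  have hp2 : 2 ≤ p := hp.two_le
  have hlog : Nat.log p n = k := Nat.log_eq_of_pow_le_of_lt_pow hk1 hk2
  have hq0 : 0 < p ^ k := pow_pos hp.pos k
  have hqb : p ^ k ≤ b * p ^ k := Nat.le_mul_of_pos_left _ hb0
  have hrw : b * p ^ k + d = d + p ^ k * b := by ring
  have hdiv : n / p ^ k = b := by
    rw [hn, hrw, Nat.add_mul_div_left _ _ hq0, Nat.div_eq_of_lt hd, zero_add]
  have hmod : n % p ^ k = d := by
    rw [hn, hrw, Nat.add_mul_mod_self_left, Nat.mod_eq_of_lt hd]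
  have ha : m / p ^ k = 0 := Nat.div_eq_of_lt hcase4
  have hc : m % p ^ k = m := Nat.mod_eq_of_lt hcase4
  have hm0 : ¬ m = 0 := by omega
  have h1 : ¬ p ^ (k+1) < m + n := not_lt.mpr hcase1
  have h2 : ¬ p ^ k < m + d := by omega
  have h3 : ¬ (1 ≤ m + d ∧ 0 < 0) := by simp
  have h4 : (0 = 0 ∧ 0 < d) := ⟨rfl, hcase5⟩
  have hmn' : m ≤ b * p ^ k - d := by omega
  have hfu : 2*m + (b * p ^ k - d) + 1 ≤ 2*m + n := by omega
  obtain ⟨heq, P', hsplit, hlen', hbd'⟩ :=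
    spAux_spec p hp2 (2*m + (b * p ^ k - d)) m (b * p ^ k - d) (2*m+n) le_rfl hmn' hfu
  have hpos : ∀ x ∈ P', 0 < x := by
    intro x hx; have := hbd' x hx; omega
  have hfil : (sp p m (b * p ^ k - d)).filter (fun x => decide (x < 0)) = negRev P' := by
    rw [hsplit]; exact filter_neg_bundle P' _ hpos
  have hstep : sp p m n =
      (negRev P').map (fun x => x + ((2*b*p^k : ℕ) : ℤ))
        ++ List.replicate (n - m) (0:ℤ)
        ++ negRev ((negRev P').map (fun x => x + ((2*b*p^k : ℕ) : ℤ))) := by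
    rw [sp, spAux_case4 p (2*m+n) m n k (p^k) b d 0 m hlog rfl hdiv hmod ha hc hm0 h1 h2 h3 h4,
      heq, hfil]
  have hlenS : ((negRev P').map (fun x => x + ((2*b*p^k : ℕ) : ℤ))).length = m := by
    rw [List.length_map, length_negRev, hlen']
  have hT1 : IsStandard p m n ↔
      (negRev P').map (fun x => x + ((2*b*p^k : ℕ) : ℤ)) =
        List.map (fun i : ℕ => (m : ℤ) + (n : ℤ) - 2 * ((i : ℤ) + 1) + 1) (List.range m) := by
    rw [IsStandard, jordanPartition, hstep, List.append_assoc, List.take_left' hlenS, stdNorm]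
  have hT2 : IsStandard p m (b * p ^ k - d) ↔
      P' = List.map
        (fun i : ℕ => (m : ℤ) + ((b * p ^ k - d : ℕ) : ℤ) - 2 * ((i : ℤ) + 1) + 1)
        (List.range m) := by
    rw [IsStandard, jordanPartition, hsplit, List.append_assoc, List.take_left' hlen', stdNorm]
  have key : (negRev (List.map
        (fun i : ℕ => (m : ℤ) + ((b * p ^ k - d : ℕ) : ℤ) - 2 * ((i : ℤ) + 1) + 1)
        (List.range m))).map
          (fun x => x + ((2*b*p^k : ℕ) : ℤ)) =
      List.map (fun i : ℕ => (m : ℤ) + (n : ℤ) - 2 * ((i : ℤ) + 1) + 1) (List.range m) := by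
    apply List.ext_getElem
    · simp [negRev]
    · intro i h1i h2i
      have him : i < m := by simpa using h2i
      simp only [negRev, List.getElem_map, List.getElem_reverse, List.length_reverse,
        List.length_map, List.length_range, List.getElem_range]
      have e2 : 2*b*p^k = b*p^k + b*p^k := by ring
      have hdq' : d ≤ b * p ^ k := by omega
      omega
  rw [hT1, hT2]
  constructor
  · intro h
    have := h.trans key.symm
    have h5 := List.map_injective_iff.mpr
      (add_left_injective ((2*b*p^k : ℕ) : ℤ)) this
    exact negRev_injective h5
  · intro h
    rw [h]; exact key
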